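/- arXiv:2602.19545 — 3 statements merged into one kernel-verified Lean document; each statement's English description precedes it below -/
import Mathlib

section
/- With q ≥ 5 and k_{1,2}'(t) = -(q-2)log 2 + log(t/(1-(q-1)t)) + (q-2)log((1-(q-2)t)/(1-(q-1)t)) on (0,1/q): k_{1,2}' is increasing on (0,1/q), and k_{1,2}'(t) ≤ k_{1,2}'(1/q⁻) = 0; consequently k_1(t) ≥ k_2(t) for all t ∈ (0, 1/q), with equality in the limit t → 1/q. -/
/-!
Both `k₁` and `k₂` have the shape `(1 - a t) log ((1 - a t) / (b t)) + log t`, whose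
derivative is just `-a log ((1 - a t) / (b t))`; hence `(k₁ - k₂)' = k_{1,2}'`. Differentiating
once more, all terms of `k_{1,2}''` collapse to `1 / (t (1 - (q-1) t) (1 - (q-2) t)) > 0`.
At `t = 1/q` both ratios `(1 - a t) / (b t)` equal `1`, so `k_{1,2}'` and `k₁ - k₂` vanish
there; monotonicity then gives `k_{1,2}' ≤ 0` on `(0, 1/q]`, so `k₁ - k₂` decreases to `0`.
-/

open Real Set Filter

theorem hasDerivAt_log_div {f g : ℝ → ℝ} {f' g' t : ℝ} (hf : HasDerivAt f f' t)
    (hg : HasDerivAt g g' t) (hft : f t ≠ 0) (hgt : g t ≠ 0) :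
    HasDerivAt (fun x => log (f x / g x)) (f' / f t - g' / g t) t := by
  have h := (hf.div hg hgt).log (div_ne_zero hft hgt)
  simp only [Pi.div_apply] at h
  convert h using 1
  field_simp

theorem hasDerivAt_one_sub_mul (a t : ℝ) : HasDerivAt (fun x => 1 - a * x) (-a) t := by
  simpa using ((hasDerivAt_id t).const_mul a).const_sub 1

/-- Both `k₁ = kTerm (q - 1) 1` and `k₂ = kTerm (q - 2) 2`. -/
noncomputable def kTerm (a b t : ℝ) : ℝ :=
  (1 - a * t) * log ((1 - a * t) / (b * t)) + log t

theorem hasDerivAt_kTerm {a b t : ℝ} (hb : b ≠ 0) (ht : t ≠ 0) (hu : 1 - a * t ≠ 0) :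
    HasDerivAt (kTerm a b) (-a * log ((1 - a * t) / (b * t))) t := by
  have hlog := hasDerivAt_log_div (hasDerivAt_one_sub_mul a t)
    ((hasDerivAt_id' t).const_mul b) hu (mul_ne_zero hb ht)
  refine (((hasDerivAt_one_sub_mul a t).mul hlog).add (hasDerivAt_log ht)).congr_deriv ?_
  field_simp
  ring

theorem kTerm_eq_log (a b t : ℝ) (h : 1 - a * t = b * t) (hbt : b * t ≠ 0) :
    kTerm a b t = log t := by
  rw [kTerm, h, div_self hbt, log_one, mul_zero, zero_add]

noncomputable def k12 (c t : ℝ) : ℝ :=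
  kTerm (c - 1) 1 t - kTerm (c - 2) 2 t

noncomputable def k12Deriv (c t : ℝ) : ℝ :=
  -(c - 2) * log 2 + log (t / (1 - (c - 1) * t))
    + (c - 2) * log ((1 - (c - 2) * t) / (1 - (c - 1) * t))

section

variable {c t : ℝ}

theorem hasDerivAt_k12 (ht : t ≠ 0) (hu : 1 - (c - 1) * t ≠ 0)
    (hv : 1 - (c - 2) * t ≠ 0) :
    HasDerivAt (k12 c) (k12Deriv c t) t := by
  refine ((hasDerivAt_kTerm one_ne_zero ht hu).sub
    (hasDerivAt_kTerm two_ne_zero ht hv)).congr_deriv ?_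
  rw [k12Deriv, log_div ht hu, log_div hv hu, one_mul, log_div hu ht, log_div hv (by positivity),
    log_mul two_ne_zero ht]
  ring

theorem hasDerivAt_k12Deriv (ht : t ≠ 0) (hu : 1 - (c - 1) * t ≠ 0)
    (hv : 1 - (c - 2) * t ≠ 0) :
    HasDerivAt (k12Deriv c) (t * (1 - (c - 1) * t) * (1 - (c - 2) * t))⁻¹ t := by
  have h₁ := hasDerivAt_log_div (hasDerivAt_id' t) (hasDerivAt_one_sub_mul (c - 1) t) ht hu
  have h₂ := hasDerivAt_log_div (hasDerivAt_one_sub_mul (c - 2) t)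
    (hasDerivAt_one_sub_mul (c - 1) t) hv hu
  refine (((hasDerivAt_const t _).add h₁).add (h₂.const_mul (c - 2))).congr_deriv ?_
  -- `field_simp` must see the denominators as atoms to use `hu` and `hv`
  set u := 1 - (c - 1) * t with hu_def
  set v := 1 - (c - 2) * t with hv_def
  field_simp
  rw [hu_def, hv_def]
  ring

theorem k12Deriv_one_div (hc : c ≠ 0) : k12Deriv c (1 / c) = 0 := by
  have hu : 1 - (c - 1) * (1 / c) = 1 / c := by field_simp; ring
  have hv : 1 - (c - 2) * (1 / c) = 2 / c := by field_simp; ring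
  rw [k12Deriv, hu, hv, div_self (by positivity), show 2 / c / (1 / c) = 2 by field_simp, log_one]
  ring

theorem pos_of_mem_Ioc_one_div (hc : 0 < c) (ht : t ∈ Ioc 0 (1 / c)) :
    0 < t ∧ 0 < 1 - (c - 1) * t ∧ 0 < 1 - (c - 2) * t := by
  obtain ⟨ht₀, htc⟩ := ht
  have : c * t ≤ 1 := by rwa [le_div_iff₀ hc, mul_comm] at htc
  exact ⟨ht₀, by nlinarith, by nlinarith⟩

theorem k12_one_div (hc : c ≠ 0) : k12 c (1 / c) = 0 := by
  rw [k12, kTerm_eq_log _ _ _ (by field_simp; ring) (by positivity),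
    kTerm_eq_log _ _ _ (by field_simp; ring) (by positivity), sub_self]

theorem strictMonoOn_k12Deriv (hc : 0 < c) : StrictMonoOn (k12Deriv c) (Ioc 0 (1 / c)) := by
  have hderiv : ∀ t ∈ Ioc 0 (1 / c),
      HasDerivAt (k12Deriv c) (t * (1 - (c - 1) * t) * (1 - (c - 2) * t))⁻¹ t := fun t ht =>
    have ⟨ht₀, hu, hv⟩ := pos_of_mem_Ioc_one_div hc ht
    hasDerivAt_k12Deriv ht₀.ne' hu.ne' hv.ne'
  refine strictMonoOn_of_hasDerivWithinAt_pos (convex_Ioc 0 (1 / c))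
    (f' := fun t => (t * (1 - (c - 1) * t) * (1 - (c - 2) * t))⁻¹)
    (fun t ht => (hderiv t ht).continuousAt.continuousWithinAt) (fun t ht => ?_) (fun t ht => ?_)
  all_goals rw [interior_Ioc] at ht
  · exact (hderiv t (Ioo_subset_Ioc_self ht)).hasDerivWithinAt
  · have ⟨ht₀, hu, hv⟩ := pos_of_mem_Ioc_one_div hc (Ioo_subset_Ioc_self ht)
    positivity

theorem k12Deriv_nonpos (hc : 0 < c) (ht : t ∈ Ioc 0 (1 / c)) : k12Deriv c t ≤ 0 := by
  rw [← k12Deriv_one_div hc.ne']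
  exact (strictMonoOn_k12Deriv hc).monotoneOn ht (right_mem_Ioc.mpr (by positivity)) ht.2

theorem antitoneOn_k12 (hc : 0 < c) : AntitoneOn (k12 c) (Ioc 0 (1 / c)) := by
  have hderiv : ∀ t ∈ Ioc 0 (1 / c), HasDerivAt (k12 c) (k12Deriv c t) t := fun t ht =>
    have ⟨ht₀, hu, hv⟩ := pos_of_mem_Ioc_one_div hc ht
    hasDerivAt_k12 ht₀.ne' hu.ne' hv.ne'
  refine antitoneOn_of_hasDerivWithinAt_nonpos (convex_Ioc 0 (1 / c)) (f' := k12Deriv c)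
    (fun t ht => (hderiv t ht).continuousAt.continuousWithinAt) (fun t ht => ?_) (fun t ht => ?_)
  all_goals rw [interior_Ioc] at ht
  · exact (hderiv t (Ioo_subset_Ioc_self ht)).hasDerivWithinAt
  · exact k12Deriv_nonpos hc (Ioo_subset_Ioc_self ht)

theorem k12_nonneg (hc : 0 < c) (ht : t ∈ Ioc 0 (1 / c)) : 0 ≤ k12 c t := by
  rw [← k12_one_div hc.ne']
  exact antitoneOn_k12 hc ht (right_mem_Ioc.mpr (by positivity)) ht.2

theorem tendsto_k12_one_div (hc : 0 < c) :
    Tendsto (k12 c) (nhdsWithin (1 / c) (Iio (1 / c))) (nhds 0) := by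
  have ⟨h₀, hu, hv⟩ := pos_of_mem_Ioc_one_div hc (right_mem_Ioc.mpr (by positivity))
  rw [← k12_one_div hc.ne']
  exact (hasDerivAt_k12 h₀.ne' hu.ne' hv.ne').continuousAt.continuousWithinAt.tendsto

end

/-- The derivative `k_{1,2}'` is increasing on `(0,1/q)`, nonpositive there
(with limiting value `0` at `1/q`), hence `k₁ ≥ k₂` on `(0,1/q)` with equality
in the limit `t → 1/q`. -/
theorem k12_monotone_and_nonpos (q : ℕ) (hq : 5 ≤ q)
    (k₁ k₂ D : ℝ → ℝ)
    (hk₁ : ∀ t : ℝ, k₁ t =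
      (1 - ((q : ℝ) - 1) * t) * Real.log ((1 - ((q : ℝ) - 1) * t) / t) + Real.log t)
    (hk₂ : ∀ t : ℝ, k₂ t =
      (1 - ((q : ℝ) - 2) * t) * Real.log ((1 - ((q : ℝ) - 2) * t) / (2 * t)) + Real.log t)
    (hD : ∀ t : ℝ, D t =
      -((q : ℝ) - 2) * Real.log 2 + Real.log (t / (1 - ((q : ℝ) - 1) * t))
        + ((q : ℝ) - 2) * Real.log ((1 - ((q : ℝ) - 2) * t) / (1 - ((q : ℝ) - 1) * t))) :
    StrictMonoOn D (Set.Ioo (0 : ℝ) (1 / (q : ℝ))) ∧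
    D (1 / (q : ℝ)) = 0 ∧
    (∀ t ∈ Set.Ioo (0 : ℝ) (1 / (q : ℝ)), D t ≤ 0) ∧
    (∀ t ∈ Set.Ioo (0 : ℝ) (1 / (q : ℝ)), k₂ t ≤ k₁ t) ∧
    Tendsto (fun t => k₁ t - k₂ t)
      (nhdsWithin (1 / (q : ℝ)) (Set.Iio (1 / (q : ℝ)))) (nhds 0) := by
  have hq₀ : (0 : ℝ) < q := by exact_mod_cast (by omega : 0 < q)
  have hk : (fun t => k₁ t - k₂ t) = k12 q :=
    funext fun t => by rw [hk₁, hk₂, k12, kTerm, kTerm, one_mul]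
  obtain rfl : D = k12Deriv q := funext hD
  refine ⟨(strictMonoOn_k12Deriv hq₀).mono Ioo_subset_Ioc_self, k12Deriv_one_div hq₀.ne',
    fun t ht => k12Deriv_nonpos hq₀ (Ioo_subset_Ioc_self ht), fun t ht => ?_, ?_⟩
  · have h := k12_nonneg hq₀ (Ioo_subset_Ioc_self ht)
    rw [← hk] at h
    exact sub_nonneg.mp h
  · exact hk ▸ tendsto_k12_one_div hq₀
end

section
/- Let Φ(t) := F_β(v_q + γt(e_2 - e_1)) for t ∈ [0,1], where F_β(x) = -(1/2)|x|² + (1/β)∑ x_k log x_k on the simplex and v_q has first two coordinates both equal to v_1 > 1/β. With γ := v_1 - 1/β > 0, Φ'(t) = γ·(φ(v_1 - γt) - φ(v_1 + γt)) < 0 for all t ∈ (0,1), where φ(s) = s - (1/β)log s. -/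
/-!
Moving mass `s` from coordinate `k` to coordinate `ℓ` changes only two summands of
`F_β x = ∑ₘ f(xₘ)`, `f(s) = -s²/2 + β⁻¹ s log s`, so `Φ(t)` differs from a constant by
`f(v₁ - γt) + f(v₁ + γt)`. Since `f' = β⁻¹ - φ`, this gives `Φ'(t) = γ (φ(v₁ - γt) - φ(v₁ + γt))`,
and as `1/β < v₁ - γt < v₁ + γt` while `φ` is strictly increasing on `(1/β, ∞)`, it is negative.
-/

open Real Finset Set

theorem sum_comp_add_mul_ite_sub_ite {ι : Type*} [Fintype ι] [DecidableEq ι] (f : ℝ → ℝ)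
    (v : ι → ℝ) {k ℓ : ι} (hkl : k ≠ ℓ) (s : ℝ) :
    ∑ m, f (v m + s * ((if m = ℓ then 1 else 0) - (if m = k then 1 else 0))) =
      ∑ m, f (v m) + (f (v k - s) - f (v k)) + (f (v ℓ + s) - f (v ℓ)) := by
  have hdiff : ∑ m, (f (v m + s * ((if m = ℓ then 1 else 0) - (if m = k then 1 else 0))) -
      f (v m)) = (f (v k - s) - f (v k)) + (f (v ℓ + s) - f (v ℓ)) := by
    rw [sum_eq_add_of_mem k ℓ (mem_univ k) (mem_univ ℓ) hkl]
    · simp [hkl, hkl.symm, sub_eq_add_neg]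
    · rintro m - ⟨hmk, hmℓ⟩
      simp [hmk, hmℓ]
  rw [sum_sub_distrib] at hdiff
  linarith

noncomputable def freeEnergyDensity (β s : ℝ) : ℝ := -(1 / 2) * s ^ 2 + (1 / β) * (s * log s)

theorem hasDerivAt_freeEnergyDensity (β : ℝ) {s : ℝ} (hs : s ≠ 0) :
    HasDerivAt (freeEnergyDensity β) (1 / β - (s - 1 / β * log s)) s := by
  refine (((hasDerivAt_pow 2 s).const_mul (-(1 / 2))).fun_add
    ((hasDerivAt_mul_log hs).const_mul (1 / β))).congr_deriv ?_
  norm_num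
  ring

theorem hasDerivAt_freeEnergyDensity_sub_add_mul (β a c : ℝ) {t : ℝ} (hsub : a - c * t ≠ 0)
    (hadd : a + c * t ≠ 0) :
    HasDerivAt (fun t => freeEnergyDensity β (a - c * t) + freeEnergyDensity β (a + c * t))
      (c * ((a - c * t - 1 / β * log (a - c * t)) - (a + c * t - 1 / β * log (a + c * t)))) t := by
  have hlin := (hasDerivAt_id t).const_mul c
  refine (((hasDerivAt_freeEnergyDensity β hsub).comp t (hlin.const_sub a)).fun_add
    ((hasDerivAt_freeEnergyDensity β hadd).comp t (hlin.const_add a))).congr_deriv ?_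
  ring

theorem strictMonoOn_sub_mul_log {β : ℝ} (hβ : 0 < β) :
    StrictMonoOn (fun s => s - 1 / β * log s) (Ioi (1 / β)) := by
  intro a (ha : 1 / β < a) b (hb : 1 / β < b) hab
  have ha0 : 0 < a := (one_div_pos.2 hβ).trans ha
  have hβa : 1 < β * a := by rwa [div_lt_iff₀' hβ] at ha
  have hlog : log b - log a ≤ b / a - 1 := by
    rw [← log_div (by linarith) ha0.ne']
    exact log_le_sub_one_of_pos (div_pos (ha0.trans hab) ha0)
  have hrhs : 1 / β * (b / a - 1) < b - a := by
    rw [show 1 / β * (b / a - 1) = (b - a) / (β * a) by field_simp,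
      div_lt_iff₀ (by linarith)]
    nlinarith
  dsimp only
  linarith [mul_le_mul_of_nonneg_left hlog (by positivity : (0 : ℝ) ≤ 1 / β)]

theorem descent_from_saddle_general (q : ℕ) (β : ℝ) (hβq : (q : ℝ) < β)
    (φ : ℝ → ℝ) (hφ : ∀ s, φ s = s - (1 / β) * Real.log s)
    (F : (Fin q → ℝ) → ℝ)
    (hF : ∀ x : Fin q → ℝ,
      F x = -(1 / 2) * (∑ m, (x m) ^ 2) + (1 / β) * ∑ m, x m * Real.log (x m))
    (v : Fin q → ℝ)
    (k ℓ : Fin q) (hkl : k ≠ ℓ) (v₁ : ℝ) (hvk : v k = v₁) (hvl : v ℓ = v₁)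
    (hv₁ : 1 / (q : ℝ) < v₁)
    (γ : ℝ) (hγ : γ = v₁ - 1 / β)
    (Φ : ℝ → ℝ)
    (hΦ : ∀ t, Φ t = F (fun m => v m + γ * t *
      ((if m = ℓ then 1 else 0) - (if m = k then 1 else 0)))) :
    ∀ t ∈ Set.Ioo (0 : ℝ) 1,
      HasDerivAt Φ (γ * (φ (v₁ - γ * t) - φ (v₁ + γ * t))) t ∧
      γ * (φ (v₁ - γ * t) - φ (v₁ + γ * t)) < 0 := by
  rintro t ⟨ht0, ht1⟩
  set f := freeEnergyDensity β
  have hq : (0 : ℝ) < q := Nat.cast_pos.2 k.pos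
  have hβ : 0 < β := hq.trans hβq
  have hv₁β : 1 / β < v₁ := (one_div_lt_one_div_of_lt hq hβq).trans hv₁
  have hγ0 : 0 < γ := by linarith
  have hγt : 0 < γ * t := mul_pos hγ0 ht0
  have hlow : 1 / β < v₁ - γ * t := by nlinarith
  have hlow₀ : 0 < v₁ - γ * t := (one_div_pos.2 hβ).trans hlow
  have hFf : ∀ x, F x = ∑ m, f (x m) := fun x => by
    simp only [hF, f, freeEnergyDensity, sum_add_distrib, mul_sum]
  have hΦf : Φ = fun t => (∑ m, f (v m) - 2 * f v₁) + (f (v₁ - γ * t) + f (v₁ + γ * t)) := by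
    funext t
    rw [hΦ, hFf, sum_comp_add_mul_ite_sub_ite f v hkl, hvk, hvl]
    ring
  have hderiv : HasDerivAt Φ (γ * (φ (v₁ - γ * t) - φ (v₁ + γ * t))) t := by
    rw [hΦf, hφ, hφ]
    exact (hasDerivAt_freeEnergyDensity_sub_add_mul β v₁ γ hlow₀.ne'
      (by linarith : 0 < v₁ + γ * t).ne').const_add _
  refine ⟨hderiv, mul_neg_of_pos_of_neg hγ0 (sub_neg.2 ?_)⟩
  rw [hφ, hφ]
  exact strictMonoOn_sub_mul_log hβ hlow (by rw [Set.mem_Ioi]; linarith) (by linarith)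

/-- Along the linear trajectory `t ↦ v + γ t (e_ℓ - e_k)` starting from a point
`v` on the simplex with `v k = v ℓ = v₁ > 1/β`, the function
`Φ(t) = F_β(v + γ t (e_ℓ - e_k))` has derivative
`Φ'(t) = γ (φ(v₁ - γ t) - φ(v₁ + γ t)) < 0` on `(0,1)`, where `γ = v₁ - 1/β`. -/
theorem descent_from_saddle (q : ℕ) (hq : 3 ≤ q) (β : ℝ) (hβq : (q : ℝ) < β)
    (φ : ℝ → ℝ) (hφ : ∀ s, φ s = s - (1 / β) * Real.log s)
    (F : (Fin q → ℝ) → ℝ)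
    (hF : ∀ x : Fin q → ℝ,
      F x = -(1 / 2) * (∑ m, (x m) ^ 2) + (1 / β) * ∑ m, x m * Real.log (x m))
    (v : Fin q → ℝ) (hvpos : ∀ m, 0 < v m) (hvsum : ∑ m, v m = 1)
    (k ℓ : Fin q) (hkl : k ≠ ℓ) (v₁ : ℝ) (hvk : v k = v₁) (hvl : v ℓ = v₁)
    (hv₁ : 1 / (q : ℝ) < v₁) (hv₁' : v₁ < 1)
    (γ : ℝ) (hγ : γ = v₁ - 1 / β) (hsum : v₁ + γ < 1)
    (Φ : ℝ → ℝ)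
    (hΦ : ∀ t, Φ t = F (fun m => v m + γ * t *
      ((if m = ℓ then 1 else 0) - (if m = k then 1 else 0)))) :
    ∀ t ∈ Set.Ioo (0 : ℝ) 1,
      HasDerivAt Φ (γ * (φ (v₁ - γ * t) - φ (v₁ + γ * t))) t ∧
      γ * (φ (v₁ - γ * t) - φ (v₁ + γ * t)) < 0 :=
  descent_from_saddle_general q β hβq φ hφ F hF v k ℓ hkl v₁ hvk hvl hv₁ γ hγ Φ hΦ
end

section
/- Let π_N^β be the pushforward of the Curie–Weiss–Potts Gibbs measure under the magnetization map, so that π_N^β(z) = (1/Z)·(N!/((Nz_1)!⋯(Nz_q)!))·e^{βN|z|²/2} for z in the discrete simplex Ξ_N. Then there is a constant c₁ > 0 independent of N such that for all z, w ∈ Ξ_N: π_N^β(z) ≤ c₁·N^q·e^{βN(F_β(w) - F_β(z))}·π_N^β(w), where F_β(x) = -(1/2)|x|² + (1/β)∑_{k: x_k>0} x_k log x_k. -/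
/-!
Writing `F = F_β` and `z = m / N`, the weight factors as
`N! e^{βN|z|²/2} / ∏ mᵢ! = N! · e^{-βN F(z)} · ∏ᵢ (mᵢ/N)^{mᵢ} / mᵢ!`,
so the claim reduces to comparing the last products for `m` and `n`.
By `kᵏ/k! ≤ eᵏ` and Stirling's upper bound `k! ≤ e √k (k/e)ᵏ`, each factor `(k/N)ᵏ/k!` lies between
`eᵏ/(e N Nᵏ)` and `eᵏ/Nᵏ`; as `∑ mᵢ = ∑ nᵢ = N`, both products lie between `e^N/((eN)^q N^N)`
and `e^N/N^N`.
-/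

open Real Finset

open scoped Nat

theorem factorial_le_exp_one_mul_sqrt_mul_pow {k : ℕ} (hk : k ≠ 0) :
    (k ! : ℝ) ≤ exp 1 * √k * (k / exp 1) ^ k := by
  obtain ⟨j, rfl⟩ := Nat.exists_eq_succ_of_ne_zero hk
  have hmono : Stirling.stirlingSeq (j + 1) ≤ exp 1 / √2 := by
    simpa [Stirling.stirlingSeq_one] using Stirling.stirlingSeq'_antitone (Nat.zero_le j)
  rw [Stirling.stirlingSeq, div_le_iff₀ (by positivity)] at hmono
  calc ((j + 1) ! : ℝ) ≤ exp 1 / √2 * (√(2 * (j + 1 : ℕ)) * ((j + 1 : ℕ) / exp 1) ^ (j + 1)) :=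
        hmono
    _ = exp 1 * √(j + 1 : ℕ) * ((j + 1 : ℕ) / exp 1) ^ (j + 1) := by
        rw [sqrt_mul zero_le_two]; field_simp

theorem div_pow_div_factorial_le (k N : ℕ) :
    ((k : ℝ) / N) ^ k / k ! ≤ exp k / (N : ℝ) ^ k := by
  rw [div_pow, div_right_comm]
  gcongr
  exact pow_div_factorial_le_exp _ k.cast_nonneg k

theorem exp_div_pow_le_div_pow_div_factorial {k N : ℕ} (hN : N ≠ 0) (hkN : k ≤ N) :
    exp k / (N : ℝ) ^ k ≤ exp 1 * N * (((k : ℝ) / N) ^ k / k !) := by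
  have hN' : (1 : ℝ) ≤ N := by exact_mod_cast Nat.one_le_iff_ne_zero.mpr hN
  rcases eq_or_ne k 0 with rfl | hk
  · simpa using one_le_mul_of_one_le_of_one_le (one_le_exp zero_le_one) hN'
  have hsqrt : √(k : ℝ) ≤ N :=
    sqrt_le_iff.mpr ⟨by positivity, by nlinarith [(Nat.cast_le (α := ℝ)).mpr hkN]⟩
  have hfact : (k ! : ℝ) * exp k ≤ exp 1 * N * k ^ k := by
    calc (k ! : ℝ) * exp k ≤ exp 1 * √k * (k / exp 1) ^ k * exp k := by
          gcongr; exact factorial_le_exp_one_mul_sqrt_mul_pow hk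
      _ = exp 1 * √k * k ^ k := by
          rw [div_pow, ← exp_nat_mul, mul_one]; field_simp
      _ ≤ exp 1 * N * k ^ k := by gcongr
  rw [div_pow, div_div, div_le_iff₀ (by positivity)]
  calc exp k = (k ! : ℝ) * exp k / k ! := by field_simp
    _ ≤ exp 1 * N * k ^ k / k ! := by gcongr
    _ = _ := by field_simp

section EntropyWeight

variable {ι : Type*} [Fintype ι]

/-- Equals `e^{N ∑ zᵢ log zᵢ} / ∏ᵢ mᵢ!` for `z = m / N` (`exp_mul_sum_mul_log_eq_prod`). -/
noncomputable def entropyWeight (N : ℕ) (m : ι → ℕ) : ℝ :=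
  ∏ i, ((m i : ℝ) / N) ^ m i / (m i) !

theorem entropyWeight_le {N : ℕ} {m : ι → ℕ} (hm : ∑ i, m i = N) :
    entropyWeight N m ≤ exp N / (N : ℝ) ^ N := by
  calc entropyWeight N m ≤ ∏ i, exp (m i) / (N : ℝ) ^ m i :=
        prod_le_prod (fun i _ => by positivity) fun i _ => div_pow_div_factorial_le (m i) N
    _ = exp N / (N : ℝ) ^ N := by
        rw [prod_div_distrib, ← exp_sum, prod_pow_eq_pow_sum, hm]; push_cast [← hm]; rfl

theorem exp_div_pow_le_entropyWeight {N : ℕ} (hN : N ≠ 0) {n : ι → ℕ} (hn : ∑ i, n i = N) :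
    exp N / (N : ℝ) ^ N ≤ (exp 1 * N) ^ Fintype.card ι * entropyWeight N n := by
  have hle (i : ι) : n i ≤ N := hn ▸ single_le_sum (fun j _ => Nat.zero_le (n j)) (mem_univ i)
  calc exp N / (N : ℝ) ^ N = ∏ i, exp (n i) / (N : ℝ) ^ n i := by
        rw [prod_div_distrib, ← exp_sum, prod_pow_eq_pow_sum, hn]; push_cast [← hn]; rfl
    _ ≤ ∏ i, exp 1 * N * (((n i : ℝ) / N) ^ n i / (n i) !) :=
        prod_le_prod (fun i _ => by positivity)
          fun i _ => exp_div_pow_le_div_pow_div_factorial hN (hle i)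
    _ = (exp 1 * N) ^ Fintype.card ι * entropyWeight N n := by
        rw [prod_mul_distrib, prod_const, card_univ, entropyWeight]

theorem entropyWeight_le_mul_entropyWeight {N : ℕ} (hN : N ≠ 0) {m n : ι → ℕ}
    (hm : ∑ i, m i = N) (hn : ∑ i, n i = N) :
    entropyWeight N m ≤ (exp 1 * N) ^ Fintype.card ι * entropyWeight N n :=
  (entropyWeight_le hm).trans (exp_div_pow_le_entropyWeight hN hn)

end EntropyWeight

section Gibbs

variable {ι : Type*} [Fintype ι]

/-- The Curie–Weiss–Potts free energy `F_β(x) = -|x|²/2 + β⁻¹ ∑ xᵢ log xᵢ`; terms with `xᵢ = 0`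
vanish since `log 0 = 0`. -/
noncomputable def freeEnergy (β : ℝ) (x : ι → ℝ) : ℝ :=
  -(1 / 2) * ∑ i, x i ^ 2 + (1 / β) * ∑ i, x i * log (x i)

/-- Unnormalized `π_N^β` at `z = m / N`. -/
noncomputable def gibbsWeight (β : ℝ) (N : ℕ) (m : ι → ℕ) : ℝ :=
  ((N ! : ℝ) / ∏ i, ((m i) ! : ℝ)) * exp (β * N * (∑ i, ((m i : ℝ) / N) ^ 2) / 2)

theorem exp_mul_sum_mul_log_eq_prod {N : ℕ} (hN : N ≠ 0) (m : ι → ℕ) :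
    exp (N * ∑ i, (m i : ℝ) / N * log ((m i : ℝ) / N)) = ∏ i, ((m i : ℝ) / N) ^ m i := by
  rw [mul_sum, exp_sum]
  refine prod_congr rfl fun i _ => ?_
  rcases eq_or_ne (m i) 0 with hi | hi
  · simp [hi]
  rw [← mul_assoc, mul_div_cancel₀ _ (Nat.cast_ne_zero.mpr hN), exp_nat_mul,
    exp_log (by positivity)]

theorem gibbsWeight_eq {β : ℝ} (hβ : β ≠ 0) {N : ℕ} (hN : N ≠ 0) (m : ι → ℕ) :
    gibbsWeight β N m =
      N ! * exp (-(β * N * freeEnergy β (fun i => (m i : ℝ) / N))) * entropyWeight N m := by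
  have hexp : -(β * N * freeEnergy β (fun i => (m i : ℝ) / N)) =
      β * N * (∑ i, ((m i : ℝ) / N) ^ 2) / 2 - N * ∑ i, (m i : ℝ) / N * log ((m i : ℝ) / N) := by
    rw [freeEnergy]; field_simp; ring
  rw [gibbsWeight, entropyWeight, hexp, exp_sub, prod_div_distrib,
    ← exp_mul_sum_mul_log_eq_prod hN]
  field_simp

end Gibbs

theorem piNbeta_rough_bound_general (q : ℕ) (β : ℝ) (hβ : 0 < β) :
    ∃ c₁ : ℝ, 0 < c₁ ∧
      ∀ N : ℕ, 1 ≤ N → ∀ m n : Fin q → ℕ,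
        (∑ i, m i) = N → (∑ i, n i) = N →
        ((N.factorial : ℝ) / ∏ i, ((m i).factorial : ℝ))
            * Real.exp (β * N * (∑ i, ((m i : ℝ) / N) ^ 2) / 2)
          ≤ c₁ * (N : ℝ) ^ q
            * Real.exp (β * N *
                ((-(1 / 2) * ∑ i, ((n i : ℝ) / N) ^ 2
                    + (1 / β) * ∑ i, ((n i : ℝ) / N) * Real.log ((n i : ℝ) / N))
                  - (-(1 / 2) * ∑ i, ((m i : ℝ) / N) ^ 2
                      + (1 / β) * ∑ i, ((m i : ℝ) / N) * Real.log ((m i : ℝ) / N))))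
            * (((N.factorial : ℝ) / ∏ i, ((n i).factorial : ℝ))
                * Real.exp (β * N * (∑ i, ((n i : ℝ) / N) ^ 2) / 2)) := by
  refine ⟨exp 1 ^ q, by positivity, fun N hN m n hm hn => ?_⟩
  have hN0 : N ≠ 0 := Nat.one_le_iff_ne_zero.mp hN
  set Fm := freeEnergy β (fun i => (m i : ℝ) / N)
  set Fn := freeEnergy β (fun i => (n i : ℝ) / N)
  change gibbsWeight β N m ≤ exp 1 ^ q * (N : ℝ) ^ q * exp (β * N * (Fn - Fm)) * gibbsWeight β N n
  have hexp : exp (-(β * N * Fm)) = exp (β * N * (Fn - Fm)) * exp (-(β * N * Fn)) := by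
    rw [← exp_add]; ring_nf
  rw [gibbsWeight_eq hβ.ne' hN0, gibbsWeight_eq hβ.ne' hN0]
  calc N ! * exp (-(β * N * Fm)) * entropyWeight N m
      ≤ N ! * exp (-(β * N * Fm)) * ((exp 1 * N) ^ q * entropyWeight N n) := by
        gcongr; simpa using entropyWeight_le_mul_entropyWeight hN0 hm hn
    _ = _ := by rw [hexp, mul_pow]; ring

/-- Rough comparison bound for the pushforward Gibbs measure `π_N^β` on the
discrete simplex: since the partition function cancels, it is stated for the
unnormalized weights `W_N(m) = (N!/∏(m_i)!) e^{βN|z|²/2}`, `z = m/N`. -/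
theorem piNbeta_rough_bound (q : ℕ) (hq : 2 ≤ q) (β : ℝ) (hβ : 0 < β) :
    ∃ c₁ : ℝ, 0 < c₁ ∧
      ∀ N : ℕ, 1 ≤ N → ∀ m n : Fin q → ℕ,
        (∑ i, m i) = N → (∑ i, n i) = N →
        ((N.factorial : ℝ) / ∏ i, ((m i).factorial : ℝ))
            * Real.exp (β * N * (∑ i, ((m i : ℝ) / N) ^ 2) / 2)
          ≤ c₁ * (N : ℝ) ^ q
            * Real.exp (β * N *
                ((-(1 / 2) * ∑ i, ((n i : ℝ) / N) ^ 2
                    + (1 / β) * ∑ i, ((n i : ℝ) / N) * Real.log ((n i : ℝ) / N))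
                  - (-(1 / 2) * ∑ i, ((m i : ℝ) / N) ^ 2
                      + (1 / β) * ∑ i, ((m i : ℝ) / N) * Real.log ((m i : ℝ) / N))))
            * (((N.factorial : ℝ) / ∏ i, ((n i).factorial : ℝ))
                * Real.exp (β * N * (∑ i, ((n i : ℝ) / N) ^ 2) / 2)) :=
  piNbeta_rough_bound_general q β hβ
end
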